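/- arXiv:2403.06188 — 6 statements merged into one kernel-verified Lean document; each statement's English description precedes it below -/
import Mathlib

section
/- Let f : (0,∞) → (0,∞). Then its GG-convex conjugate f^◇ : (0,∞) → [0,∞] is GG-convex and lower semicontinuous on (0,∞). -/
open Real Set ENNReal

/-- The GG-convex conjugate of `f : (0,∞) → (0,∞)`:
`f^◇(y) = sup_{x>0} exp(log x · log y) / f x`, with values in `[0,∞]`
(with the conventions `1/0 = ∞`, `1/∞ = 0`, realized by `ℝ≥0∞` division). -/
noncomputable def GGdiamond (f : ℝ → ℝ) : ℝ → ℝ≥0∞ := fun y =>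
  ⨆ x ∈ Set.Ioi (0 : ℝ),
    ENNReal.ofReal (Real.exp (Real.log x * Real.log y)) / ENNReal.ofReal (f x)

/-- Multiplication on `[0,∞]` with the convention `0 · ∞ = ∞`. -/
noncomputable def gmul (a b : ℝ≥0∞) : ℝ≥0∞ :=
  if (a = 0 ∧ b = ⊤) ∨ (a = ⊤ ∧ b = 0) then ⊤ else a * b

/-- A function `g : (0,∞) → [0,∞]` is GG-convex if for all `x, y ∈ (0,∞)` and
`λ ∈ (0,1)` one has `g (x^λ y^(1-λ)) ≤ g x ^ λ · g y ^ (1-λ)`, with `0 · ∞ = ∞`. -/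
def GGConvexEOn (g : ℝ → ℝ≥0∞) : Prop :=
  ∀ x ∈ Set.Ioi (0 : ℝ), ∀ y ∈ Set.Ioi (0 : ℝ), ∀ l ∈ Set.Ioo (0 : ℝ) 1,
    g (x ^ l * y ^ (1 - l)) ≤ gmul (g x ^ l) (g y ^ (1 - l))

lemma gmul_ge (a b : ℝ≥0∞) : a * b ≤ gmul a b := by
  unfold gmul; split
  · exact le_top
  · exact le_rfl

/-- For `f : (0,∞) → (0,∞)`, the GG-convex conjugate `f^◇ : (0,∞) → [0,∞]` is
GG-convex and lower semicontinuous on `(0,∞)`. -/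
theorem ggdiamond_ggConvex_lsc (f : ℝ → ℝ)
    (hf0 : ∀ x ∈ Set.Ioi (0 : ℝ), 0 < f x) :
    GGConvexEOn (GGdiamond f) ∧
      LowerSemicontinuousOn (GGdiamond f) (Set.Ioi (0 : ℝ)) := by
  constructor
  · intro x hx y hy l hl
    refine le_trans ?_ (gmul_ge _ _)
    set m := x ^ l * y ^ (1 - l) with hm
    have hx0 : (0:ℝ) < x := hx
    have hy0 : (0:ℝ) < y := hy
    have hl0 : (0:ℝ) < l := hl.1
    have hl1 : (0:ℝ) < 1 - l := by linarith [hl.2]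
    have hlogm : Real.log m = l * Real.log x + (1 - l) * Real.log y := by
      rw [hm, Real.log_mul (by positivity) (by positivity), Real.log_rpow hx0,
        Real.log_rpow hy0]
    refine iSup₂_le fun z hz => ?_
    have hz0 : (0:ℝ) < z := hz
    have hfz : (0:ℝ) < f z := hf0 z hz
    have key : ENNReal.ofReal (Real.exp (Real.log z * Real.log m)) / ENNReal.ofReal (f z)
        = (ENNReal.ofReal (Real.exp (Real.log z * Real.log x)) / ENNReal.ofReal (f z)) ^ l *
          (ENNReal.ofReal (Real.exp (Real.log z * Real.log y)) / ENNReal.ofReal (f z)) ^ (1 - l) := by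
      have hne0 : ENNReal.ofReal (f z) ^ l ≠ 0 :=
        (ENNReal.rpow_pos (by simp [hfz]) ENNReal.ofReal_ne_top).ne'
      have hnetop : ENNReal.ofReal (f z) ^ l ≠ ⊤ :=
        ENNReal.rpow_ne_top_of_nonneg hl0.le ENNReal.ofReal_ne_top
      rw [ENNReal.div_rpow_of_nonneg _ _ hl0.le, ENNReal.div_rpow_of_nonneg _ _ hl1.le]
      rw [div_eq_mul_inv, div_eq_mul_inv, div_eq_mul_inv,
        mul_mul_mul_comm, ← ENNReal.mul_inv (Or.inl hne0) (Or.inl hnetop)]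
      congr 1
      · rw [ENNReal.ofReal_rpow_of_pos (Real.exp_pos _),
          ENNReal.ofReal_rpow_of_pos (Real.exp_pos _),
          ← ENNReal.ofReal_mul (by positivity), ← Real.exp_mul, ← Real.exp_mul,
          ← Real.exp_add]
        congr 2
        rw [hlogm]; ring
      · rw [ENNReal.ofReal_rpow_of_pos hfz, ENNReal.ofReal_rpow_of_pos hfz,
          ← ENNReal.ofReal_mul (by positivity), ← Real.rpow_add hfz]
        norm_num
    rw [key]
    have h1 : ENNReal.ofReal (Real.exp (Real.log z * Real.log x)) / ENNReal.ofReal (f z)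
        ≤ GGdiamond f x := le_iSup₂ (f := fun z _ =>
          ENNReal.ofReal (Real.exp (Real.log z * Real.log x)) / ENNReal.ofReal (f z)) z hz
    have h2 : ENNReal.ofReal (Real.exp (Real.log z * Real.log y)) / ENNReal.ofReal (f z)
        ≤ GGdiamond f y := le_iSup₂ (f := fun z _ =>
          ENNReal.ofReal (Real.exp (Real.log z * Real.log y)) / ENNReal.ofReal (f z)) z hz
    exact mul_le_mul' (ENNReal.rpow_le_rpow h1 hl0.le) (ENNReal.rpow_le_rpow h2 hl1.le)
  · apply lowerSemicontinuousOn_biSup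
    intro z hz
    have hfz : (0:ℝ) < f z := hf0 z hz
    have hc : ContinuousOn (fun y : ℝ =>
        ENNReal.ofReal (Real.exp (Real.log z * Real.log y)) / ENNReal.ofReal (f z))
        (Set.Ioi (0:ℝ)) := by
      apply ContinuousOn.comp (g := fun a : ℝ≥0∞ => a / ENNReal.ofReal (f z))
        (t := Set.univ)
      · exact ((ENNReal.continuous_div_const _ (by simp [hfz])).continuousOn)
      · exact ENNReal.continuous_ofReal.comp_continuousOn
          (Real.continuous_exp.comp_continuousOn
            (continuousOn_const.mul (Real.continuousOn_log.mono (by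
              intro t ht; exact ne_of_gt ht))))
      · intro t _; trivial
    exact hc.lowerSemicontinuousOn
end

section
/- Let f : (0,∞) → (0,∞). Then f^{◇◇} ≤ f pointwise. If moreover f is GG-convex and lower semicontinuous on (0,∞), then f^{◇◇} = f, i.e. f(x) = sup_{y>0} exp(log x · log y)/f^◇(y) for all x ∈ (0,∞). -/
open Real Set ENNReal

/-- A function `f : (0,∞) → (0,∞)` (modeled as a total function on `ℝ`) is GG-convex
(geometrically convex) if for all `x, y ∈ (0,∞)` and `λ ∈ (0,1)` one has
`f (x^λ * y^(1-λ)) ≤ f x ^ λ * f y ^ (1-λ)`. -/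
def GGConvexOn (f : ℝ → ℝ) : Prop :=
  ∀ x ∈ Set.Ioi (0 : ℝ), ∀ y ∈ Set.Ioi (0 : ℝ), ∀ l ∈ Set.Ioo (0 : ℝ) 1,
    f (x ^ l * y ^ (1 - l)) ≤ f x ^ l * f y ^ (1 - l)

/-- The GG-convex biconjugate of `f`:
`f^◇◇(x) = sup_{y>0} exp(log x · log y) / f^◇(y)`, with the conventions
`1/0 = ∞`, `1/∞ = 0`, `c/∞ = 0`, `c/0 = ∞` (realized by `ℝ≥0∞` division). -/
noncomputable def GGbidual (f : ℝ → ℝ) : ℝ → ℝ≥0∞ := fun x =>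
  ⨆ y ∈ Set.Ioi (0 : ℝ),
    ENNReal.ofReal (Real.exp (Real.log x * Real.log y)) / GGdiamond f y

/-- A real-valued convex function on all of `ℝ` has a subgradient at every point. -/
lemma exists_subgradient (g : ℝ → ℝ) (hg : ConvexOn ℝ Set.univ g) (u₀ : ℝ) :
    ∃ v : ℝ, ∀ u : ℝ, g u₀ + v * (u - u₀) ≤ g u := by
  set S : Set ℝ := (fun u => (g u₀ - g u) / (u₀ - u)) '' Set.Iio u₀ with hS
  have hne : S.Nonempty := ⟨_, ⟨u₀ - 1, by simp, rfl⟩⟩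
  have hbdd : BddAbove S := by
    refine ⟨(g (u₀ + 1) - g u₀) / (u₀ + 1 - u₀), ?_⟩
    rintro s ⟨u, hu, rfl⟩
    have := hg.slope_mono_adjacent (x := u) (y := u₀) (z := u₀ + 1)
      (Set.mem_univ _) (Set.mem_univ _) hu (by linarith)
    calc (g u₀ - g u) / (u₀ - u) = (g u₀ - g u) / (u₀ - u) := rfl
      _ ≤ _ := this
  refine ⟨sSup S, fun u => ?_⟩
  rcases lt_trichotomy u u₀ with h | h | h
  · have hmem : (g u₀ - g u) / (u₀ - u) ≤ sSup S :=
      le_csSup hbdd ⟨u, h, rfl⟩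
    have hpos : (0:ℝ) < u₀ - u := by linarith
    rw [div_le_iff₀ hpos] at hmem
    nlinarith
  · simp [h]
  · have hub : sSup S ≤ (g u - g u₀) / (u - u₀) := by
      refine csSup_le hne ?_
      rintro s ⟨u', hu', rfl⟩
      exact hg.slope_mono_adjacent (Set.mem_univ _) (Set.mem_univ _) hu' h
    have hpos : (0:ℝ) < u - u₀ := by linarith
    rw [le_div_iff₀ hpos] at hub
    nlinarith

/-- `f^◇◇ ≤ f` always; if `f` is GG-convex and lower semicontinuous on `(0,∞)` then
`f^◇◇ = f` on `(0,∞)`. -/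
theorem ggbidual_le_and_eq (f : ℝ → ℝ)
    (hf0 : ∀ x ∈ Set.Ioi (0 : ℝ), 0 < f x) :
    (∀ x ∈ Set.Ioi (0 : ℝ), GGbidual f x ≤ ENNReal.ofReal (f x)) ∧
    (GGConvexOn f → LowerSemicontinuousOn f (Set.Ioi (0 : ℝ)) →
      ∀ x ∈ Set.Ioi (0 : ℝ), GGbidual f x = ENNReal.ofReal (f x)) := by
  have hle : ∀ x ∈ Set.Ioi (0 : ℝ), GGbidual f x ≤ ENNReal.ofReal (f x) := by
    intro x hx
    have hfx : 0 < f x := hf0 x hx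
    refine iSup₂_le fun y hy => ?_
    have hd : ENNReal.ofReal (Real.exp (Real.log x * Real.log y)) / ENNReal.ofReal (f x)
        ≤ GGdiamond f y := le_iSup₂ (f := fun x _ =>
          ENNReal.ofReal (Real.exp (Real.log x * Real.log y)) / ENNReal.ofReal (f x)) x hx
    refine ENNReal.div_le_of_le_mul ?_
    calc ENNReal.ofReal (Real.exp (Real.log x * Real.log y))
        = ENNReal.ofReal (f x) *
          (ENNReal.ofReal (Real.exp (Real.log x * Real.log y)) / ENNReal.ofReal (f x)) := by
          rw [ENNReal.mul_div_cancel' (by simp [hfx]) (by simp)]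
      _ ≤ ENNReal.ofReal (f x) * GGdiamond f y := by
          exact mul_le_mul_right hd _
  refine ⟨hle, fun hGG _ x₀ hx₀ => ?_⟩
  refine le_antisymm (hle x₀ hx₀) ?_
  have hfx₀ : 0 < f x₀ := hf0 x₀ hx₀
  -- the log-log transform
  set g : ℝ → ℝ := fun u => Real.log (f (Real.exp u)) with hgdef
  have hgconv : ConvexOn ℝ Set.univ g := by
    refine ⟨convex_univ, ?_⟩
    intro a _ b _ la lb hla hlb hlab
    rcases eq_or_lt_of_le hla with h0 | hla'
    · have : lb = 1 := by linarith
      simp [← h0, this]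
    rcases eq_or_lt_of_le hlb with h0 | hlb'
    · have : la = 1 := by linarith
      simp [← h0, this]
    have hb : lb = 1 - la := by linarith
    have key := hGG (Real.exp a) (by simp [Real.exp_pos]) (Real.exp b)
      (by simp [Real.exp_pos]) la ⟨hla', by linarith⟩
    have hfa : 0 < f (Real.exp a) := hf0 _ (by simp [Real.exp_pos])
    have hfb : 0 < f (Real.exp b) := hf0 _ (by simp [Real.exp_pos])
    have hx : Real.exp (la • a + lb • b) = Real.exp a ^ la * Real.exp b ^ (1 - la) := by
      rw [← Real.exp_mul, ← Real.exp_mul, ← Real.exp_add, hb]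
      congr 1
      simp only [smul_eq_mul]; ring
    have hfpos : 0 < f (Real.exp (la • a + lb • b)) := hf0 _ (by simp [Real.exp_pos])
    have key' : f (Real.exp (la • a + lb • b)) ≤ f (Real.exp a) ^ la * f (Real.exp b) ^ (1 - la) := by
      rw [hx]; exact key
    have hlog := Real.log_le_log hfpos key'
    calc g (la • a + lb • b) ≤ Real.log (f (Real.exp a) ^ la * f (Real.exp b) ^ (1 - la)) :=
          hlog
      _ = la * g a + lb * g b := by
          rw [Real.log_mul (by positivity) (by positivity), Real.log_rpow hfa,
            Real.log_rpow hfb, hb]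
  -- subgradient at u₀ = log x₀
  set u₀ : ℝ := Real.log x₀ with hu₀
  obtain ⟨v, hv⟩ := exists_subgradient g hgconv u₀
  have hgu₀ : g u₀ = Real.log (f x₀) := by
    simp [hgdef, hu₀, Real.exp_log (mem_Ioi.mp hx₀)]
  -- the witness y = exp v
  set y : ℝ := Real.exp v with hy
  have hyIoi : y ∈ Set.Ioi (0:ℝ) := by simp [hy, Real.exp_pos]
  have hlogy : Real.log y = v := Real.log_exp v
  -- diamond bound
  have hdia : GGdiamond f y ≤ ENNReal.ofReal (Real.exp (u₀ * v) / f x₀) := by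
    refine iSup₂_le fun x hx => ?_
    have hfx : 0 < f x := hf0 x hx
    rw [hlogy, ← ENNReal.ofReal_div_of_pos hfx]
    refine ENNReal.ofReal_le_ofReal ?_
    -- exp (log x * v) / f x ≤ exp (u₀ * v) / f x₀, i.e.
    -- exp (log x * v) * f x₀ ≤ exp (u₀ * v) * f x
    have hsub := hv (Real.log x)
    have hgx : g (Real.log x) = Real.log (f x) := by
      simp [hgdef, Real.exp_log (mem_Ioi.mp hx)]
    have h1 : Real.exp (g u₀ + v * (Real.log x - u₀)) ≤ f x := by
      calc Real.exp (g u₀ + v * (Real.log x - u₀)) ≤ Real.exp (g (Real.log x)) :=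
            Real.exp_le_exp.mpr hsub
        _ = f x := by rw [hgx, Real.exp_log hfx]
    have h2 : Real.exp (g u₀ + v * (Real.log x - u₀))
        = f x₀ * Real.exp (v * (Real.log x - u₀)) := by
      rw [Real.exp_add, hgu₀, Real.exp_log hfx₀]
    rw [div_le_div_iff₀ hfx hfx₀]
    have h3 : Real.exp (Real.log x * v) = Real.exp (u₀ * v) * Real.exp (v * (Real.log x - u₀)) := by
      rw [← Real.exp_add]; congr 1; ring
    rw [h3]
    calc Real.exp (u₀ * v) * Real.exp (v * (Real.log x - u₀)) * f x₀
        = Real.exp (u₀ * v) * (f x₀ * Real.exp (v * (Real.log x - u₀))) := by ring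
      _ ≤ Real.exp (u₀ * v) * f x := by
          rw [← h2]; exact mul_le_mul_of_nonneg_left h1 (Real.exp_pos _).le
  -- conclude
  have hterm : ENNReal.ofReal (Real.exp (Real.log x₀ * Real.log y)) / GGdiamond f y
      ≤ GGbidual f x₀ := le_iSup₂ (f := fun y _ =>
        ENNReal.ofReal (Real.exp (Real.log x₀ * Real.log y)) / GGdiamond f y) y hyIoi
  refine le_trans ?_ hterm
  rw [hlogy]
  calc ENNReal.ofReal (f x₀)
      = ENNReal.ofReal (Real.exp (u₀ * v) / (Real.exp (u₀ * v) / f x₀)) := by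
        congr 1
        have ha := (Real.exp_pos (u₀ * v)).ne'
        have hb := hfx₀.ne'
        field_simp
    _ = ENNReal.ofReal (Real.exp (u₀ * v)) / ENNReal.ofReal (Real.exp (u₀ * v) / f x₀) := by
        rw [ENNReal.ofReal_div_of_pos (by positivity)]
    _ ≤ ENNReal.ofReal (Real.exp (Real.log x₀ * v)) / GGdiamond f y := by
        rw [hu₀]
        exact ENNReal.div_le_div_left hdia _
end

section
/- Let f, g : (0,∞) → (0,∞). Then the GG-convex conjugate of the multiplicative inf-convolution is the pointwise product of the conjugates: (f ⊗ g)^◇(y) = f^◇(y) · g^◇(y) for all y ∈ (0,∞). -/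
open Real Set ENNReal

/-- The multiplicative inf-convolution of `f, g : (0,∞) → (0,∞)`:
`(f ⊗ g)(x) = inf { f x₁ · g x₂ | x₁, x₂ > 0, x₁ x₂ = x }`, with values in `[0,∞)`. -/
noncomputable def mconv (f g : ℝ → ℝ) : ℝ → ℝ := fun x =>
  sInf {z : ℝ | ∃ x₁ ∈ Set.Ioi (0 : ℝ), ∃ x₂ ∈ Set.Ioi (0 : ℝ),
    x₁ * x₂ = x ∧ z = f x₁ * g x₂}

/-!
Writing `x = x₁ x₂`, the kernel `exp (log x · log y)` factors as the product of the kernels at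
`x₁` and `x₂`. Since `1 / inf = sup (1 / ·)` in `[0,∞]`, the conjugate of `f ⊗ g` is the supremum
over pairs `x₁, x₂ > 0` of `(exp (log x₁ · log y) / f x₁) · (exp (log x₂ · log y) / g x₂)`, and
multiplication in `[0,∞]` distributes over suprema.
-/

lemma ENNReal.ofReal_sInf {S : Set ℝ} (hS : S.Nonempty) :
    ENNReal.ofReal (sInf S) = ⨅ a ∈ S, ENNReal.ofReal a := by
  have := hS.to_subtype
  rw [sInf_eq_iInf', ENNReal.ofReal_iInf, iInf_subtype']

lemma ofReal_exp_log_mul_mul_log {x₁ x₂ : ℝ} (h₁ : 0 < x₁) (h₂ : 0 < x₂) (y : ℝ) :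
    ENNReal.ofReal (exp (log (x₁ * x₂) * log y))
      = ENNReal.ofReal (exp (log x₁ * log y)) * ENNReal.ofReal (exp (log x₂ * log y)) := by
  rw [log_mul h₁.ne' h₂.ne', add_mul, exp_add, ENNReal.ofReal_mul (exp_pos _).le]

lemma iSup_Ioi_iSup_mul_eq {α : Type*} [CompleteLattice α] (F : ℝ → ℝ → ℝ → α) :
    ⨆ x ∈ Ioi (0 : ℝ), ⨆ x₁ ∈ Ioi (0 : ℝ), ⨆ x₂ ∈ Ioi (0 : ℝ), ⨆ (_ : x₁ * x₂ = x), F x x₁ x₂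
      = ⨆ x₁ ∈ Ioi (0 : ℝ), ⨆ x₂ ∈ Ioi (0 : ℝ), F (x₁ * x₂) x₁ x₂ := by
  refine le_antisymm (iSup₂_le fun x _ => iSup₂_le fun x₁ h₁ => iSup₂_le fun x₂ h₂ => ?_)
    (iSup₂_le fun x₁ h₁ => iSup₂_le fun x₂ h₂ => ?_)
  · exact iSup_le fun hx => hx ▸
      le_iSup₂_of_le x₁ h₁ (le_iSup₂ (f := fun x₂ _ => F (x₁ * x₂) x₁ x₂) x₂ h₂)
  · exact le_iSup₂_of_le (x₁ * x₂) (mem_Ioi.2 (mul_pos h₁ h₂)) <| le_iSup₂_of_le x₁ h₁ <|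
      le_iSup₂_of_le x₂ h₂ <| le_iSup_of_le rfl le_rfl

variable {f g : ℝ → ℝ}

lemma ofReal_mconv {x : ℝ} (hx : 0 < x) :
    ENNReal.ofReal (mconv f g x) = ⨅ x₁ ∈ Ioi (0 : ℝ), ⨅ x₂ ∈ Ioi (0 : ℝ), ⨅ (_ : x₁ * x₂ = x),
      ENNReal.ofReal (f x₁ * g x₂) := by
  rw [mconv, ENNReal.ofReal_sInf]
  · simp only [mem_ofPred_eq, iInf_exists, iInf_and, iInf_comm (ι := ℝ), iInf_iInf_eq_left]
  · exact ⟨f x * g 1, x, hx, 1, mem_Ioi.2 one_pos, mul_one x, rfl⟩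

lemma GGdiamond_mconv_eq_iSup (y : ℝ) :
    GGdiamond (mconv f g) y = ⨆ x₁ ∈ Ioi (0 : ℝ), ⨆ x₂ ∈ Ioi (0 : ℝ),
      ENNReal.ofReal (exp (log (x₁ * x₂) * log y)) / ENNReal.ofReal (f x₁ * g x₂) :=
  calc GGdiamond (mconv f g) y
      = ⨆ x ∈ Ioi (0 : ℝ), ⨆ x₁ ∈ Ioi (0 : ℝ), ⨆ x₂ ∈ Ioi (0 : ℝ), ⨆ (_ : x₁ * x₂ = x),
          ENNReal.ofReal (exp (log x * log y)) / ENNReal.ofReal (f x₁ * g x₂) :=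
        biSup_congr fun x hx => by
          simp only [ofReal_mconv hx, div_eq_mul_inv, ENNReal.inv_iInf, ENNReal.mul_iSup]
    _ = _ := iSup_Ioi_iSup_mul_eq _

theorem ggdiamond_mconv_general (f g : ℝ → ℝ)
    (hf0 : ∀ x ∈ Set.Ioi (0 : ℝ), 0 < f x) :
    ∀ y ∈ Set.Ioi (0 : ℝ),
      GGdiamond (mconv f g) y = GGdiamond f y * GGdiamond g y := by
  intro y _
  calc GGdiamond (mconv f g) y
      = ⨆ x₁ ∈ Ioi (0 : ℝ), ⨆ x₂ ∈ Ioi (0 : ℝ),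
          ENNReal.ofReal (exp (log (x₁ * x₂) * log y)) / ENNReal.ofReal (f x₁ * g x₂) :=
        GGdiamond_mconv_eq_iSup y
    _ = ⨆ x₁ ∈ Ioi (0 : ℝ), ⨆ x₂ ∈ Ioi (0 : ℝ),
          ENNReal.ofReal (exp (log x₁ * log y)) / ENNReal.ofReal (f x₁)
            * (ENNReal.ofReal (exp (log x₂ * log y)) / ENNReal.ofReal (g x₂)) :=
        biSup_congr fun x₁ h₁ => biSup_congr fun x₂ h₂ => by
          rw [ofReal_exp_log_mul_mul_log h₁ h₂, ENNReal.ofReal_mul (hf0 x₁ h₁).le,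
            ENNReal.mul_div_mul_comm (.inr ENNReal.ofReal_ne_top) (.inl ENNReal.ofReal_ne_top)]
    _ = GGdiamond f y * GGdiamond g y := by
        simp_rw [GGdiamond, ENNReal.iSup_mul, ENNReal.mul_iSup]

/-- The GG-convex conjugate of a multiplicative inf-convolution is the pointwise
product of the conjugates. -/
theorem ggdiamond_mconv (f g : ℝ → ℝ)
    (hf0 : ∀ x ∈ Set.Ioi (0 : ℝ), 0 < f x)
    (hg0 : ∀ x ∈ Set.Ioi (0 : ℝ), 0 < g x) :
    ∀ y ∈ Set.Ioi (0 : ℝ),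
      GGdiamond (mconv f g) y = GGdiamond f y * GGdiamond g y :=
  ggdiamond_mconv_general f g hf0
end

section
/- Let 𝒢(0,∞) be the class of GG-convex, proper, lower semicontinuous functions f : (0,∞) → [0,∞]. A one-to-one map T : 𝒢(0,∞) → 𝒢(0,∞) satisfies (a) T(T(f)) = f for every f ∈ 𝒢(0,∞) and (b) f ≥ g implies T(f) ≤ T(g) for all f, g ∈ 𝒢(0,∞), if and only if there exist constants A > 0, B > 0 and C ∈ ℝ such that (T(f))(x) = A · x^{log B} · f^◇(B·x^C) for every f ∈ 𝒢(0,∞) and x ∈ (0,∞). -/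
/-!
In logarithmic coordinates `t = log x`, `t ↦ log f (e^t)` is convex and lower semicontinuous
for `f ∈ 𝒢(0,∞)`, and `◇` becomes the Legendre transform. Power functions
`x ↦ e^b x^p` (affine in `t`) and spikes (finite at a single point) are characterised by the
order alone: what lies below a power function is a chain, and so is what lies above a spike.
Hence an order-reversing involution `T` exchanges powers and spikes, and the order relations
between the two families force the induced maps on their parameters to be affine, through a
monotone Cauchy equation. Since every `f` is the supremum of the powers below it
(Fenchel–Moreau, by Hahn–Banach in the log-epigraph) and the infimum of the spikes above it,
this determines `T f`. Conversely, for `C ≠ 0` the explicit transform is an order-reversing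
involution by biconjugation, while for `C = 0` it identifies distinct spikes.
-/

open Real Set ENNReal

/-- The positive half-line `(0,∞)` as a type. -/
abbrev Rpos : Type := {x : ℝ // 0 < x}

/-- The geometric combination `x^λ · y^(1-λ)` of two points of `(0,∞)`. -/
noncomputable def gcomb (x y : Rpos) (l : ℝ) : Rpos :=
  ⟨x.1 ^ l * y.1 ^ (1 - l),
    mul_pos (Real.rpow_pos_of_pos x.2 l) (Real.rpow_pos_of_pos y.2 (1 - l))⟩

/-- `f : (0,∞) → [0,∞]` is GG-convex: `f (x^λ y^(1-λ)) ≤ f x ^ λ · f y ^ (1-λ)`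
for `λ ∈ (0,1)`, with the convention `0 · ∞ = ∞`. -/
def GGConvexP (f : Rpos → ℝ≥0∞) : Prop :=
  ∀ x y : Rpos, ∀ l ∈ Set.Ioo (0 : ℝ) 1,
    f (gcomb x y l) ≤ gmul (f x ^ l) (f y ^ (1 - l))

/-- `f : (0,∞) → [0,∞]` is proper: positive everywhere with nonempty effective domain. -/
def ProperP (f : Rpos → ℝ≥0∞) : Prop :=
  (∀ x, 0 < f x) ∧ ∃ x, f x < ⊤

/-- The class `𝒢(0,∞)` of GG-convex, proper, lower semicontinuous functions
`(0,∞) → [0,∞]`. -/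
def Gclass : Set (Rpos → ℝ≥0∞) :=
  {f | GGConvexP f ∧ ProperP f ∧ LowerSemicontinuous f}

/-- The GG-convex conjugate `f^◇(y) = sup_{x>0} exp(log x · log y) / f x`,
with the conventions `1/0 = ∞`, `1/∞ = 0` (realized by `ℝ≥0∞` division). -/
noncomputable def diamondP (f : Rpos → ℝ≥0∞) : Rpos → ℝ≥0∞ := fun y =>
  ⨆ x : Rpos, ENNReal.ofReal (Real.exp (Real.log x.1 * Real.log y.1)) / f x

noncomputable section

def eexp (r : ℝ) : ℝ≥0∞ := ENNReal.ofReal (Real.exp r)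

lemma eexp_pos (r : ℝ) : 0 < eexp r := ENNReal.ofReal_pos.2 (Real.exp_pos r)

lemma eexp_ne_zero (r : ℝ) : eexp r ≠ 0 := (eexp_pos r).ne'

lemma eexp_ne_top (r : ℝ) : eexp r ≠ ⊤ := ENNReal.ofReal_ne_top

lemma eexp_zero : eexp 0 = 1 := by simp [eexp]

lemma eexp_add (r s : ℝ) : eexp (r + s) = eexp r * eexp s := by
  rw [eexp, Real.exp_add, ENNReal.ofReal_mul (Real.exp_pos r).le]; rfl

lemma eexp_inv (r : ℝ) : (eexp r)⁻¹ = eexp (-r) := by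
  rw [eexp, eexp, ← ENNReal.ofReal_inv_of_pos (Real.exp_pos r), Real.exp_neg]

@[simp] lemma eexp_le_eexp {r s : ℝ} : eexp r ≤ eexp s ↔ r ≤ s := by
  rw [eexp, eexp, ENNReal.ofReal_le_ofReal_iff (Real.exp_pos s).le, Real.exp_le_exp]

@[simp] lemma eexp_lt_eexp {r s : ℝ} : eexp r < eexp s ↔ r < s :=
  lt_iff_lt_of_le_iff_le eexp_le_eexp

lemma eexp_rpow (r s : ℝ) : eexp r ^ s = eexp (r * s) := by
  rw [eexp, eexp, ENNReal.ofReal_rpow_of_pos (Real.exp_pos r), ← Real.exp_mul, mul_comm]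

lemma eexp_div (r s : ℝ) : eexp r / eexp s = eexp (r - s) := by
  rw [eexp, eexp, ← ENNReal.ofReal_div_of_pos (Real.exp_pos s), ← Real.exp_sub]; rfl

lemma exists_eexp_eq {a : ℝ≥0∞} (h0 : a ≠ 0) (ht : a ≠ ⊤) : ∃ r, eexp r = a :=
  ⟨Real.log a.toReal, by
    rw [eexp, Real.exp_log (ENNReal.toReal_pos h0 ht), ENNReal.ofReal_toReal ht]⟩

lemma exists_eexp_between {a b : ℝ≥0∞} (h : a < b) : ∃ r, a < eexp r ∧ eexp r < b := by
  obtain ⟨c, hac, hcb⟩ := exists_between h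
  obtain ⟨r, rfl⟩ := exists_eexp_eq (pos_of_gt hac).ne' (hcb.trans_le le_top).ne
  exact ⟨r, hac, hcb⟩

lemma eq_top_of_forall_eexp_le {a : ℝ≥0∞} (h : ∀ r, eexp r ≤ a) : a = ⊤ := by
  by_contra ha
  have hlt : ENNReal.ofReal a.toReal < eexp a.toReal :=
    (ENNReal.ofReal_lt_ofReal_iff (Real.exp_pos _)).2 (by linarith [Real.add_one_le_exp a.toReal])
  rw [ENNReal.ofReal_toReal ha] at hlt
  exact (hlt.trans_le (h _)).false

namespace Rpos

def log (x : Rpos) : ℝ := Real.log x.1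

def exp (t : ℝ) : Rpos := ⟨Real.exp t, Real.exp_pos t⟩

@[simp] lemma log_exp (t : ℝ) : (exp t).log = t := Real.log_exp t

@[simp] lemma exp_log (x : Rpos) : exp x.log = x := Subtype.ext (Real.exp_log x.2)

lemma log_injective : Function.Injective log := fun x y h => by
  rw [← exp_log x, ← exp_log y, h]

lemma continuous_log : Continuous log :=
  Real.continuousOn_log.comp_continuous continuous_subtype_val fun x => x.2.ne'

lemma continuous_exp : Continuous exp := Real.continuous_exp.subtype_mk _

lemma log_gcomb (x y : Rpos) (l : ℝ) : (gcomb x y l).log = l * x.log + (1 - l) * y.log := by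
  rw [log, gcomb, Real.log_mul (Real.rpow_pos_of_pos x.2 l).ne' (Real.rpow_pos_of_pos y.2 _).ne',
    Real.log_rpow x.2, Real.log_rpow y.2]; rfl

end Rpos

lemma gmul_of_ne_zero {a b : ℝ≥0∞} (ha : a ≠ 0) (hb : b ≠ 0) : gmul a b = a * b :=
  if_neg (by rintro (⟨h, -⟩ | ⟨-, h⟩) <;> contradiction)

/-- `x ↦ e^b x^p`. -/
def powerFn (b p : ℝ) : Rpos → ℝ≥0∞ := fun x => eexp (b + p * x.log)

def spikeFn (u c : ℝ) : Rpos → ℝ≥0∞ := fun x => if x.log = u then eexp c else ⊤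

lemma spikeFn_of_log_eq {u c : ℝ} {x : Rpos} (h : x.log = u) : spikeFn u c x = eexp c := if_pos h

lemma spikeFn_of_log_ne {u c : ℝ} {x : Rpos} (h : x.log ≠ u) : spikeFn u c x = ⊤ := if_neg h

@[simp] lemma spikeFn_exp (u c : ℝ) : spikeFn u c (Rpos.exp u) = eexp c :=
  spikeFn_of_log_eq (Rpos.log_exp u)

lemma powerFn_mem_Gclass (b p : ℝ) : powerFn b p ∈ Gclass := by
  refine ⟨fun x y l hl => ?_, ⟨fun x => eexp_pos _, Rpos.exp 0, ENNReal.ofReal_lt_top⟩, ?_⟩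
  · rw [powerFn, powerFn, powerFn, eexp_rpow, eexp_rpow,
      gmul_of_ne_zero (eexp_ne_zero _) (eexp_ne_zero _), ← eexp_add, Rpos.log_gcomb]
    exact le_of_eq (congrArg eexp (by ring))
  · exact (ENNReal.continuous_ofReal.comp (Real.continuous_exp.comp
      (continuous_const.add (continuous_const.mul Rpos.continuous_log)))).lowerSemicontinuous

lemma eexp_le_spikeFn (u c : ℝ) (x : Rpos) : eexp c ≤ spikeFn u c x := by
  unfold spikeFn; split_ifs
  exacts [le_rfl, le_top]

lemma spikeFn_mem_Gclass (u c : ℝ) : spikeFn u c ∈ Gclass := by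
  have hpos : ∀ x, 0 < spikeFn u c x := fun x => (eexp_pos c).trans_le (eexp_le_spikeFn u c x)
  refine ⟨fun x y l hl => ?_, ⟨hpos, Rpos.exp u, by simp [eexp]⟩, fun x r hr => ?_⟩
  · have hl' : 0 < 1 - l := by linarith [hl.2]
    have hx0 := (ENNReal.rpow_pos_of_nonneg (hpos x) hl.1.le).ne'
    have hy0 := (ENNReal.rpow_pos_of_nonneg (hpos y) hl'.le).ne'
    rw [gmul_of_ne_zero hx0 hy0]
    by_cases hx : x.log = u
    · by_cases hy : y.log = u
      · rw [spikeFn_of_log_eq hx, spikeFn_of_log_eq hy, spikeFn_of_log_eq (by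
          rw [Rpos.log_gcomb, hx, hy]; ring), eexp_rpow, eexp_rpow, ← eexp_add]
        exact le_of_eq (congrArg eexp (by ring))
      · rw [spikeFn_of_log_ne hy, ENNReal.top_rpow_of_pos hl', ENNReal.mul_top hx0]
        exact le_top
    · rw [spikeFn_of_log_ne hx, ENNReal.top_rpow_of_pos hl.1, ENNReal.top_mul hy0]
      exact le_top
  · change r < spikeFn u c x at hr
    by_cases hx : x.log = u
    · rw [spikeFn_of_log_eq hx] at hr
      exact Filter.Eventually.of_forall fun x' => hr.trans_le (eexp_le_spikeFn u c x')
    · filter_upwards [Rpos.continuous_log.continuousAt.eventually_ne hx] with x' hx'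
      change r < spikeFn u c x'
      rw [spikeFn_of_log_ne hx']
      exact hr.trans_le le_top

lemma powerFn_le_powerFn_iff {b p b' p' : ℝ} :
    powerFn b p ≤ powerFn b' p' ↔ p = p' ∧ b ≤ b' := by
  refine ⟨fun h => ?_, fun ⟨hp, hb⟩ x => by simpa [powerFn, hp] using hb⟩
  have key : ∀ t, b + p * t ≤ b' + p' * t := fun t => by simpa [powerFn] using h (Rpos.exp t)
  have hp : p = p' := by
    by_contra hne
    have hdiv : (p - p') * ((b' - b + 1) / (p - p')) = b' - b + 1 :=
      mul_div_cancel₀ _ (sub_ne_zero.2 hne)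
    linarith [key ((b' - b + 1) / (p - p'))]
  exact ⟨hp, by simpa using key 0⟩

lemma powerFn_inj {b p b' p' : ℝ} : powerFn b p = powerFn b' p' ↔ b = b' ∧ p = p' := by
  rw [le_antisymm_iff, powerFn_le_powerFn_iff, powerFn_le_powerFn_iff]
  constructor
  · rintro ⟨⟨hp, hb⟩, -, hb'⟩; exact ⟨le_antisymm hb hb', hp⟩
  · rintro ⟨rfl, rfl⟩; simp

lemma le_spikeFn_iff {f : Rpos → ℝ≥0∞} {u c : ℝ} :
    f ≤ spikeFn u c ↔ f (Rpos.exp u) ≤ eexp c := by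
  refine ⟨fun h => by simpa using h (Rpos.exp u), fun h x => ?_⟩
  by_cases hx : x.log = u
  · rwa [spikeFn_of_log_eq hx, ← Rpos.exp_log x, hx]
  · rw [spikeFn_of_log_ne hx]; exact le_top

lemma powerFn_le_spikeFn_iff {b p u c : ℝ} : powerFn b p ≤ spikeFn u c ↔ b + p * u ≤ c := by
  simp [le_spikeFn_iff, powerFn]

lemma spikeFn_le_spikeFn_iff {u c u' c' : ℝ} :
    spikeFn u c ≤ spikeFn u' c' ↔ u = u' ∧ c ≤ c' := by
  rw [le_spikeFn_iff]
  by_cases h : u = u'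
  · subst h; simp
  · rw [spikeFn_of_log_ne (by simpa using Ne.symm h)]
    simp [h, eexp_ne_top]

lemma spikeFn_inj {u c u' c' : ℝ} : spikeFn u c = spikeFn u' c' ↔ u = u' ∧ c = c' := by
  rw [le_antisymm_iff, spikeFn_le_spikeFn_iff, spikeFn_le_spikeFn_iff]
  constructor
  · rintro ⟨⟨hu, hc⟩, -, hc'⟩; exact ⟨hu, le_antisymm hc hc'⟩
  · rintro ⟨rfl, rfl⟩; simp

lemma eexp_div_le_eexp_iff {s c : ℝ} {a : ℝ≥0∞} :
    eexp s / a ≤ eexp c ↔ eexp (s - c) ≤ a := by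
  rw [ENNReal.div_le_iff_le_mul (Or.inr (eexp_ne_top c)) (Or.inr (eexp_ne_zero c)),
    ← ENNReal.mul_le_mul_iff_right (eexp_ne_zero (-c)) (eexp_ne_top (-c)), ← mul_assoc,
    ← eexp_add, ← eexp_add, neg_add_cancel, eexp_zero, one_mul, neg_add_eq_sub]

lemma diamondP_apply (f : Rpos → ℝ≥0∞) (y : Rpos) :
    diamondP f y = ⨆ x : Rpos, eexp (x.log * y.log) / f x := rfl

lemma diamondP_eq_iSup (f : Rpos → ℝ≥0∞) (y : Rpos) :
    diamondP f y = ⨆ t : ℝ, eexp (t * y.log) / f (Rpos.exp t) := by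
  rw [diamondP_apply, ← (Function.LeftInverse.surjective Rpos.exp_log).iSup_comp]
  simp only [Rpos.log_exp]

lemma le_diamondP (f : Rpos → ℝ≥0∞) (x y : Rpos) : eexp (x.log * y.log) / f x ≤ diamondP f y :=
  le_iSup (fun x : Rpos => eexp (x.log * y.log) / f x) x

lemma diamondP_antitone : Antitone diamondP := fun _ _ h _ =>
  iSup_mono fun x => ENNReal.div_le_div_left (h x) _

lemma diamondP_pos {f : Rpos → ℝ≥0∞} (hf : ∃ x, f x < ⊤) (y : Rpos) : 0 < diamondP f y := by
  obtain ⟨x, hx⟩ := hf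
  exact (ENNReal.div_pos (eexp_ne_zero _) hx.ne).trans_le (le_diamondP f x y)

lemma diamondP_spikeFn (u c : ℝ) : diamondP (spikeFn u c) = powerFn (-c) u := by
  funext y
  rw [diamondP_eq_iSup, powerFn, neg_add_eq_sub]
  refine le_antisymm (iSup_le fun t => ?_) (le_iSup_of_le u ?_)
  · by_cases ht : t = u
    · rw [ht, spikeFn_exp, eexp_div]
    · rw [spikeFn_of_log_ne (by simpa using ht), ENNReal.div_top]; exact zero_le
  · rw [spikeFn_exp, eexp_div]

lemma diamondP_powerFn (b p : ℝ) : diamondP (powerFn b p) = spikeFn p (-b) := by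
  funext y
  have hterm : ∀ t, eexp (t * y.log) / powerFn b p (Rpos.exp t) = eexp (t * (y.log - p) - b) :=
    fun t => by rw [powerFn, Rpos.log_exp, eexp_div]; ring_nf
  simp only [diamondP_eq_iSup, hterm]
  by_cases hy : y.log = p
  · simp [spikeFn_of_log_eq hy, hy]
  · rw [spikeFn_of_log_ne hy]
    refine eq_top_of_forall_eexp_le fun r => le_iSup_of_le ((r + b) / (y.log - p)) ?_
    rw [div_mul_cancel₀ _ (sub_ne_zero.2 hy), add_sub_cancel_right]

lemma powerFn_le_iff_diamondP_le {f : Rpos → ℝ≥0∞} {b p : ℝ} :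
    powerFn b p ≤ f ↔ diamondP f (Rpos.exp p) ≤ eexp (-b) := by
  simp only [diamondP_apply, iSup_le_iff, eexp_div_le_eexp_iff, Rpos.log_exp, sub_neg_eq_add]
  exact forall_congr' fun x => by rw [powerFn, add_comm, mul_comm]

def logEpigraph (f : Rpos → ℝ≥0∞) : Set (ℝ × ℝ) := {q | f (Rpos.exp q.1) ≤ eexp q.2}

section logEpigraph

variable {f : Rpos → ℝ≥0∞}

lemma gcomb_exp (s t l : ℝ) :
    gcomb (Rpos.exp s) (Rpos.exp t) l = Rpos.exp (l * s + (1 - l) * t) :=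
  Rpos.log_injective (by simp [Rpos.log_gcomb])

lemma convex_logEpigraph (hf : GGConvexP f) (hpos : ∀ x, 0 < f x) :
    Convex ℝ (logEpigraph f) := by
  refine convex_iff_forall_pos.2 fun q₁ h₁ q₂ h₂ l m hl hm hlm => ?_
  obtain rfl : m = 1 - l := by linarith
  have hconv := hf (Rpos.exp q₁.1) (Rpos.exp q₂.1) l ⟨hl, by linarith⟩
  rw [gcomb_exp, gmul_of_ne_zero (ENNReal.rpow_pos_of_nonneg (hpos _) hl.le).ne'
    (ENNReal.rpow_pos_of_nonneg (hpos _) hm.le).ne'] at hconv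
  calc f (Rpos.exp (l * q₁.1 + (1 - l) * q₂.1))
      ≤ f (Rpos.exp q₁.1) ^ l * f (Rpos.exp q₂.1) ^ (1 - l) := hconv
    _ ≤ eexp q₁.2 ^ l * eexp q₂.2 ^ (1 - l) :=
        mul_le_mul' (ENNReal.rpow_le_rpow h₁ hl.le) (ENNReal.rpow_le_rpow h₂ hm.le)
    _ = eexp (l * q₁.2 + (1 - l) * q₂.2) := by rw [eexp_rpow, eexp_rpow, ← eexp_add]; ring_nf

lemma isClosed_logEpigraph (hf : LowerSemicontinuous f) : IsClosed (logEpigraph f) :=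
  hf.isClosed_epigraph.preimage ((Rpos.continuous_exp.comp continuous_fst).prodMk
    (ENNReal.continuous_ofReal.comp (Real.continuous_exp.comp continuous_snd)))

lemma powerFn_le_iff_forall_mem_logEpigraph (hpos : ∀ x, 0 < f x) {b p : ℝ} :
    powerFn b p ≤ f ↔ ∀ q ∈ logEpigraph f, b + p * q.1 ≤ q.2 := by
  refine ⟨fun h q hq => ?_, fun h x => ?_⟩
  · simpa [powerFn] using (h (Rpos.exp q.1)).trans hq
  · rcases eq_or_ne (f x) ⊤ with hx | hx
    · simp [hx]
    obtain ⟨r, hr⟩ := exists_eexp_eq (hpos x).ne' hx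
    rw [← hr]
    simpa [powerFn] using h (x.log, r) (by simp [logEpigraph, hr])

lemma exists_separation (hf : f ∈ Gclass) {t ρ : ℝ} (h : (t, ρ) ∉ logEpigraph f) :
    ∃ α γ u : ℝ, γ ≤ 0 ∧ (∀ q ∈ logEpigraph f, α * q.1 + γ * q.2 < u) ∧
      u < α * t + γ * ρ := by
  obtain ⟨φ, u, hS, hp⟩ := geometric_hahn_banach_closed_point
    (convex_logEpigraph hf.1 hf.2.1.1) (isClosed_logEpigraph hf.2.2) h
  have hφ : ∀ q : ℝ × ℝ, φ q = φ (1, 0) * q.1 + φ (0, 1) * q.2 := fun q => by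
    have hq : q = q.1 • ((1 : ℝ), (0 : ℝ)) + q.2 • ((0 : ℝ), (1 : ℝ)) := by ext <;> simp
    conv_lhs => rw [hq]
    rw [map_add, map_smul, map_smul, smul_eq_mul, smul_eq_mul, mul_comm, mul_comm q.2]
  replace hS : ∀ q ∈ logEpigraph f, φ (1, 0) * q.1 + φ (0, 1) * q.2 < u := fun q hq => by
    rw [← hφ]; exact hS q hq
  rw [hφ] at hp
  refine ⟨φ (1, 0), φ (0, 1), u, not_lt.1 fun hγ => ?_, hS, hp⟩
  -- the epigraph is unbounded above, which a separating line sloping upwards cannot allow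
  obtain ⟨x, hx⟩ := hf.2.1.2
  obtain ⟨r, hr⟩ := exists_eexp_eq (hf.2.1.1 x).ne' hx.ne
  set r' := max r ((u - φ (1, 0) * x.log) / φ (0, 1))
  have hmem : (x.log, r') ∈ logEpigraph f := by
    show f (Rpos.exp x.log) ≤ eexp r'
    rw [Rpos.exp_log, ← hr, eexp_le_eexp]
    exact le_max_left _ _
  have h1 := hS _ hmem
  have h2 : (u - φ (1, 0) * x.log) / φ (0, 1) * φ (0, 1) ≤ r' * φ (0, 1) :=
    mul_le_mul_of_nonneg_right (le_max_right _ _) hγ.le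
  rw [div_mul_cancel₀ _ hγ.ne'] at h2
  linarith

end logEpigraph

section FenchelMoreau

variable {f : Rpos → ℝ≥0∞}

lemma exists_powerFn_of_separation (hpos : ∀ x, 0 < f x) {α γ u t ρ : ℝ} (hγ : γ < 0)
    (hS : ∀ q ∈ logEpigraph f, α * q.1 + γ * q.2 < u) (hu : u < α * t + γ * ρ) :
    ∃ b p, powerFn b p ≤ f ∧ ρ < b + p * t := by
  have hline : ∀ s, u / γ + -(α / γ) * s = (u - α * s) / γ := fun s => by ring
  refine ⟨u / γ, -(α / γ), (powerFn_le_iff_forall_mem_logEpigraph hpos).2 fun q hq => ?_, ?_⟩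
  · rw [hline, div_le_iff_of_neg hγ]; linarith [hS q hq]
  · rw [hline, lt_div_iff_of_neg hγ]; linarith

lemma exists_powerFn_le (hf : f ∈ Gclass) : ∃ b p, powerFn b p ≤ f := by
  obtain ⟨x, hx⟩ := hf.2.1.2
  obtain ⟨r, hr⟩ := exists_eexp_eq (hf.2.1.1 x).ne' hx.ne
  have hmem : (x.log, r) ∈ logEpigraph f := by simp [logEpigraph, hr]
  have hnot : (x.log, r - 1) ∉ logEpigraph f := by simp [logEpigraph, ← hr]
  obtain ⟨α, γ, u, -, hS, hu⟩ := exists_separation hf hnot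
  have hγ : γ < 0 := by linarith [hS _ hmem]
  obtain ⟨b, p, h, -⟩ := exists_powerFn_of_separation hf.2.1.1 hγ hS hu
  exact ⟨b, p, h⟩

lemma exists_powerFn_le_of_eexp_lt (hf : f ∈ Gclass) {t ρ : ℝ} (h : eexp ρ < f (Rpos.exp t)) :
    ∃ b p, powerFn b p ≤ f ∧ ρ < b + p * t := by
  obtain ⟨α, γ, u, hγ, hS, hu⟩ :=
    exists_separation hf (t := t) (ρ := ρ) (by simpa [logEpigraph] using h)
  rcases hγ.lt_or_eq with hγ | rfl
  · exact exists_powerFn_of_separation hf.2.1.1 hγ hS hu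
  -- a vertical separating line: tilt a known minorant by a large multiple of it
  simp only [zero_mul, add_zero] at hS hu
  obtain ⟨b₀, p₀, h₀⟩ := exists_powerFn_le hf
  have hmin := (powerFn_le_iff_forall_mem_logEpigraph hf.2.1.1).1 h₀
  set s := (|ρ - (b₀ + p₀ * t)| + 1) / (α * t - u)
  have hs : 0 < s := div_pos (by positivity) (by linarith)
  have hst : s * (α * t - u) = |ρ - (b₀ + p₀ * t)| + 1 := div_mul_cancel₀ _ (by linarith)
  have htilt : ∀ r, b₀ - s * u + (p₀ + s * α) * r = b₀ + p₀ * r + s * (α * r - u) :=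
    fun r => by ring
  refine ⟨b₀ - s * u, p₀ + s * α,
    (powerFn_le_iff_forall_mem_logEpigraph hf.2.1.1).2 fun q hq => ?_, ?_⟩
  · rw [htilt]
    linarith [hmin q hq, mul_nonpos_of_nonneg_of_nonpos hs.le (sub_nonpos.2 (hS q hq).le)]
  · rw [htilt, hst]
    linarith [le_abs_self (ρ - (b₀ + p₀ * t))]

lemma powerFn_le_diamondP_diamondP {b p : ℝ} (h : powerFn b p ≤ f) :
    powerFn b p ≤ diamondP (diamondP f) := fun x =>
  calc powerFn b p x = eexp (p * x.log) / eexp (-b) := by rw [eexp_div, powerFn]; ring_nf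
    _ ≤ eexp (p * x.log) / diamondP f (Rpos.exp p) :=
        ENNReal.div_le_div_left (powerFn_le_iff_diamondP_le.1 h) _
    _ ≤ diamondP (diamondP f) x := by simpa using le_diamondP (diamondP f) (Rpos.exp p) x

theorem diamondP_diamondP (hf : f ∈ Gclass) : diamondP (diamondP f) = f := by
  funext x
  refine le_antisymm (iSup_le fun y => ?_) (not_lt.1 fun hlt => ?_)
  · rcases eq_or_ne (f x) ⊤ with hx | hx
    · rw [hx]; exact le_top
    obtain ⟨r, hr⟩ := exists_eexp_eq (hf.2.1.1 x).ne' hx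
    change eexp (y.log * x.log) / _ ≤ f x
    rw [← hr, eexp_div_le_eexp_iff]
    simpa [← hr, eexp_div, mul_comm] using le_diamondP f x y
  · obtain ⟨ρ, h₁, h₂⟩ := exists_eexp_between hlt
    obtain ⟨b, p, hbp, hρ⟩ := exists_powerFn_le_of_eexp_lt hf (t := x.log) (by rwa [Rpos.exp_log])
    exact (h₁.trans (eexp_lt_eexp.2 hρ)).not_ge (powerFn_le_diamondP_diamondP hbp x)

lemma properP_diamondP (hf : f ∈ Gclass) : ProperP (diamondP f) := by
  obtain ⟨b, p, h⟩ := exists_powerFn_le hf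
  exact ⟨diamondP_pos hf.2.1.2,
    Rpos.exp p, (powerFn_le_iff_diamondP_le.1 h).trans_lt ENNReal.ofReal_lt_top⟩

end FenchelMoreau

section Shapes

variable {f : Rpos → ℝ≥0∞}

lemma exists_eq_spikeFn (hpos : ∀ x, 0 < f x) {u : ℝ} (hu : f (Rpos.exp u) ≠ ⊤)
    (htop : ∀ x, x.log ≠ u → f x = ⊤) : ∃ c, f = spikeFn u c := by
  obtain ⟨c, hc⟩ := exists_eexp_eq (hpos _).ne' hu
  refine ⟨c, funext fun x => ?_⟩
  by_cases hx : x.log = u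
  · rw [spikeFn_of_log_eq hx, hc, ← hx, Rpos.exp_log]
  · rw [spikeFn_of_log_ne hx, htop x hx]

lemma exists_eq_spikeFn_of_spikeFn_le (hf : ProperP f) {u c : ℝ} (h : spikeFn u c ≤ f) :
    ∃ c', f = spikeFn u c' := by
  have htop : ∀ x, x.log ≠ u → f x = ⊤ := fun x hx =>
    top_le_iff.1 (spikeFn_of_log_ne (c := c) hx ▸ h x)
  obtain ⟨x, hx⟩ := hf.2
  have hxu : x.log = u := by_contra fun hne => hx.ne (htop x hne)
  exact exists_eq_spikeFn hf.1 (by rw [← hxu, Rpos.exp_log]; exact hx.ne) htop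

lemma exists_eq_powerFn_of_le_powerFn (hf : f ∈ Gclass) {b p : ℝ} (h : f ≤ powerFn b p) :
    ∃ b', f = powerFn b' p := by
  have hspike : spikeFn p (-b) ≤ diamondP f := diamondP_powerFn b p ▸ diamondP_antitone h
  obtain ⟨c, hc⟩ := exists_eq_spikeFn_of_spikeFn_le (properP_diamondP hf) hspike
  exact ⟨-c, by rw [← diamondP_diamondP hf, hc, diamondP_spikeFn]⟩

end Shapes

namespace Gclass

def power (b p : ℝ) : ↥Gclass := ⟨powerFn b p, powerFn_mem_Gclass b p⟩

def spike (u c : ℝ) : ↥Gclass := ⟨spikeFn u c, spikeFn_mem_Gclass u c⟩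

lemma spike_inj {u c u' c' : ℝ} : spike u c = spike u' c' ↔ u = u' ∧ c = c' :=
  Subtype.ext_iff.trans spikeFn_inj

lemma power_inj {b p b' p' : ℝ} : power b p = power b' p' ↔ b = b' ∧ p = p' :=
  Subtype.ext_iff.trans powerFn_inj

lemma isChain_Ici_spike (u c : ℝ) : IsChain (· ≤ ·) (Set.Ici (spike u c)) := by
  intro F hF G hG _
  obtain ⟨c₁, h₁⟩ := exists_eq_spikeFn_of_spikeFn_le F.2.2.1 hF
  obtain ⟨c₂, h₂⟩ := exists_eq_spikeFn_of_spikeFn_le G.2.2.1 hG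
  change F.1 ≤ G.1 ∨ G.1 ≤ F.1
  rw [h₁, h₂, spikeFn_le_spikeFn_iff, spikeFn_le_spikeFn_iff]
  exact (le_total c₁ c₂).imp (⟨rfl, ·⟩) (⟨rfl, ·⟩)

lemma isChain_Iic_power (b p : ℝ) : IsChain (· ≤ ·) (Set.Iic (power b p)) := by
  intro F hF G hG _
  obtain ⟨b₁, h₁⟩ := exists_eq_powerFn_of_le_powerFn F.2 hF
  obtain ⟨b₂, h₂⟩ := exists_eq_powerFn_of_le_powerFn G.2 hG
  change F.1 ≤ G.1 ∨ G.1 ≤ F.1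
  rw [h₁, h₂, powerFn_le_powerFn_iff, powerFn_le_powerFn_iff]
  exact (le_total b₁ b₂).imp (⟨rfl, ·⟩) (⟨rfl, ·⟩)

lemma exists_eq_spike_of_isChain_Ici (f : ↥Gclass) (h : IsChain (· ≤ ·) (Set.Ici f)) :
    ∃ u c, f = spike u c := by
  obtain ⟨x₀, hx₀⟩ := f.2.2.1.2
  have hmaj : ∀ x, f.1 x ≠ ⊤ → ∃ c, f ≤ spike x.log c := fun x hx => by
    obtain ⟨c, hc⟩ := exists_eexp_eq (f.2.2.1.1 x).ne' hx
    exact ⟨c, le_spikeFn_iff.2 (by rw [Rpos.exp_log, hc])⟩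
  have htop : ∀ x, x.log ≠ x₀.log → f.1 x = ⊤ := fun x hx => by_contra fun hne => by
    obtain ⟨c, hc⟩ := hmaj x hne
    obtain ⟨c₀, hc₀⟩ := hmaj x₀ hx₀.ne
    have hcmp := h hc hc₀ fun heq => hx (spike_inj.1 heq).1
    simp only [spike, Subtype.mk_le_mk, spikeFn_le_spikeFn_iff] at hcmp
    exact hcmp.elim (fun h' => hx h'.1) (fun h' => hx h'.1.symm)
  obtain ⟨c, hc⟩ := exists_eq_spikeFn f.2.2.1.1 (by rw [Rpos.exp_log]; exact hx₀.ne) htop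
  exact ⟨x₀.log, c, Subtype.ext hc⟩

lemma exists_eq_power_of_isChain_Iic (f : ↥Gclass) (h : IsChain (· ≤ ·) (Set.Iic f)) :
    ∃ b p, f = power b p := by
  obtain ⟨b₀, p₀, h₀⟩ := exists_powerFn_le f.2
  have htop : ∀ y, y.log ≠ p₀ → diamondP f.1 y = ⊤ := fun y hy => by_contra fun hne => by
    obtain ⟨σ, hσ⟩ := exists_eexp_eq (diamondP_pos f.2.2.1.2 y).ne' hne
    have hmin : power (-σ) y.log ≤ f := powerFn_le_iff_diamondP_le.2 (by simp [hσ])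
    have hcmp := h hmin (show power b₀ p₀ ≤ f from h₀) fun heq =>
      hy (powerFn_inj.1 (congrArg Subtype.val heq)).2
    simp only [power, Subtype.mk_le_mk, powerFn_le_powerFn_iff] at hcmp
    exact hcmp.elim (fun h' => hy h'.1) (fun h' => hy h'.1.symm)
  obtain ⟨c, hc⟩ := exists_eq_spikeFn (properP_diamondP f.2).1
    ((powerFn_le_iff_diamondP_le.1 h₀).trans_lt ENNReal.ofReal_lt_top).ne htop
  exact ⟨-c, p₀, Subtype.ext (by rw [← diamondP_diamondP f.2, hc, diamondP_spikeFn]; rfl)⟩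

end Gclass

section AntitoneInvolution

variable {α : Type*} [PartialOrder α] {T : α → α} (hInv : Function.Involutive T)
  (hT : Antitone T)
include hInv hT

lemma apply_le_apply_iff {a b : α} : T a ≤ T b ↔ b ≤ a :=
  ⟨fun h => by simpa only [hInv a, hInv b] using hT h, fun h => hT h⟩

lemma isChain_Iic_apply {x : α} (h : IsChain (· ≤ ·) (Set.Ici x)) :
    IsChain (· ≤ ·) (Set.Iic (T x)) := by
  have hpre : Set.Iic (T x) = T ⁻¹' Set.Ici x := Set.ext fun a => by
    simp only [Set.mem_Iic, Set.mem_preimage, Set.mem_Ici]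
    rw [← apply_le_apply_iff hInv hT, hInv x]
  rw [hpre]
  exact h.symm.preimage (· ≤ ·) (flip (· ≤ ·)) T hInv.injective fun _ _ =>
    (apply_le_apply_iff hInv hT).1

lemma isChain_Ici_apply {x : α} (h : IsChain (· ≤ ·) (Set.Iic x)) :
    IsChain (· ≤ ·) (Set.Ici (T x)) := by
  have hpre : Set.Ici (T x) = T ⁻¹' Set.Iic x := Set.ext fun a => by
    simp only [Set.mem_Ici, Set.mem_Iic, Set.mem_preimage]
    rw [← apply_le_apply_iff hInv hT, hInv x]
  rw [hpre]
  exact h.symm.preimage (· ≤ ·) (flip (· ≤ ·)) T hInv.injective fun _ _ =>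
    (apply_le_apply_iff hInv hT).1

end AntitoneInvolution

lemma affine_of_map_add_of_antitone {g : ℝ → ℝ} (hadd : ∀ x y, g (x + y) = g x + g y - g 0)
    (hanti : Antitone g) (hsurj : Function.Surjective g) (x : ℝ) :
    g x = g 0 - x * (g 0 - g 1) := by
  have h := map_real_smul (AddMonoidHom.mk' (fun x => g 0 - g x) fun x y => by rw [hadd]; ring)
    ((hanti.neg.const_add (g 0)).continuous_of_surjective fun v => ?_) x 1
  · simp only [AddMonoidHom.mk'_apply, smul_eq_mul, mul_one] at h
    linarith
  · obtain ⟨y, hy⟩ := hsurj (g 0 - v)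
    exact ⟨y, by simp [hy]⟩

lemma boundary_eq_of_forall_le_iff {B K : ℝ → ℝ → ℝ} {P Y : ℝ → ℝ}
    (hM : ∀ u κ q β, β + q * u ≤ κ ↔ B u κ + P u * Y q ≤ K q β) (hB : ∀ u, Antitone (B u))
    (hsurj : ∀ u, Function.Surjective (B u)) (u q β : ℝ) :
    B u (β + q * u) + P u * Y q = K q β := by
  refine le_antisymm ((hM u _ q β).1 le_rfl) ?_
  obtain ⟨κ, hκ⟩ := hsurj u (K q β - P u * Y q)
  have h := hB u ((hM u κ q β).2 (by rw [hκ]; linarith))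
  rw [hκ] at h
  linarith

lemma affine_of_functional_equation {g P Y : ℝ → ℝ}
    (hfe : ∀ u q β, g (β + q * u) - g β = (P u - P 0) * (Y 0 - Y q)) (hg : Antitone g)
    (hinv : ∀ u κ, g (g κ - P u * Y 0) + P 0 * (u - Y 0) = κ) :
    ∃ C, C ≠ 0 ∧ C * Y 0 = -P 0 ∧ ∀ u, g u = g 0 - u ∧ P u = P 0 + C * u := by
  have hlin := affine_of_map_add_of_antitone (fun x y => by
      have h₁ := hfe y 1 x
      have h₂ := hfe y 1 0
      rw [one_mul] at h₁ h₂
      rw [zero_add] at h₂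
      linarith) hg
    fun v => ⟨g (v - P 0 * Y 0) - P 0 * Y 0, by linarith [hinv 0 (v - P 0 * Y 0)]⟩
  set E := g 0 - g 1
  have hE : E = 1 := by
    have h : ∀ κ, g (g κ - P 0 * Y 0) = g 0 - (g 0 - κ * E - P 0 * Y 0) * E := fun κ => by
      rw [hlin (g κ - P 0 * Y 0), hlin κ]
    nlinarith [hinv 0 0, hinv 0 1, h 0, h 1, hg zero_le_one]
  simp only [hE, mul_one] at hlin
  have hP : ∀ u, -u = (P u - P 0) * (Y 0 - Y 1) := fun u => by
    have h := hfe u 1 0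
    rw [one_mul, zero_add, hlin u] at h
    linarith
  have hPY : ∀ u, P u * Y 0 = P 0 * (Y 0 - u) := fun u => by
    have h := hinv u 0
    rw [hlin (g 0 - P u * Y 0)] at h
    linarith
  set C := P 1 - P 0
  have hC : C * (Y 0 - Y 1) = -1 := by linarith [hP 1]
  have hPu : ∀ u, P u = P 0 + C * u := fun u => by
    refine (mul_left_inj' (right_ne_zero_of_mul (by rw [hC]; norm_num) : Y 0 - Y 1 ≠ 0)).1 ?_
    linear_combination -(hP u) - u * hC
  exact ⟨C, left_ne_zero_of_mul (by rw [hC]; norm_num), by linarith [hPY 1],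
    fun u => ⟨hlin u, hPu u⟩⟩

/-- `B, P` and `Y, K` stand for the parameters of `T (spike u κ) = power (B u κ) (P u)` and
`T (power β q) = spike (Y q) (K q β)`; `hM` says that `T` reverses the order between the two. -/
lemma exists_affine_of_conjugation_relations {B K : ℝ → ℝ → ℝ} {P Y : ℝ → ℝ}
    (hM : ∀ u κ q β, β + q * u ≤ κ ↔ B u κ + P u * Y q ≤ K q β) (hB : ∀ u, Antitone (B u))
    (hYP : ∀ u, Y (P u) = u) (hKB : ∀ u κ, K (P u) (B u κ) = κ)
    (hBK : ∀ q β, B (Y q) (K q β) = β) :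
    ∃ a b C, C ≠ 0 ∧ ∀ u κ, P u = b + C * u ∧ B u κ = a + b * u - κ := by
  have hbd := boundary_eq_of_forall_le_iff hM hB fun u β =>
    ⟨K (P u) β, by simpa only [hYP] using hBK (P u) β⟩
  have hBg : ∀ u κ, B u κ = K 0 κ - P u * Y 0 := fun u κ => by
    have h := hbd u 0 κ
    rw [zero_mul, add_zero] at h
    linarith
  have hK : ∀ q β, K q β = K 0 β + P 0 * (Y q - Y 0) := fun q β => by
    have h := hbd 0 q β
    rw [mul_zero, add_zero, hBg] at h
    linarith
  obtain ⟨C, hC, hCY, hlin⟩ := affine_of_functional_equation (g := K 0) (P := P) (Y := Y)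
    (fun u q β => by linarith [hbd u q β, hBg u (β + q * u), hK q β])
    (fun x y h => by linarith [hB 0 h, hBg 0 x, hBg 0 y])
    (fun u κ => by
      have h := hKB u κ
      rwa [hK, hYP, hBg] at h)
  refine ⟨K 0 0 - P 0 * Y 0, P 0, C, hC, fun u κ => ⟨(hlin u).2, ?_⟩⟩
  rw [hBg, (hlin κ).1, (hlin u).2]
  linear_combination -u * hCY

section OrderReversingInvolution

open Gclass

variable {T : ↥Gclass → ↥Gclass} (hInv : Function.Involutive T) (hT : Antitone T)
include hInv hT

lemma exists_apply_spike_eq_power (u c : ℝ) : ∃ b p, T (spike u c) = power b p :=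
  exists_eq_power_of_isChain_Iic _ (isChain_Iic_apply hInv hT (isChain_Ici_spike u c))

lemma exists_apply_power_eq_spike (b p : ℝ) : ∃ u c, T (power b p) = spike u c :=
  exists_eq_spike_of_isChain_Ici _ (isChain_Ici_apply hInv hT (isChain_Iic_power b p))

lemma exists_apply_spike_power_params : ∃ (B : ℝ → ℝ → ℝ) (P Y : ℝ → ℝ) (K : ℝ → ℝ → ℝ),
    (∀ u κ, T (spike u κ) = power (B u κ) (P u)) ∧
      ∀ q β, T (power β q) = spike (Y q) (K q β) := by
  choose B P hBP using exists_apply_spike_eq_power hInv hT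
  choose Y K hYK using fun q β => exists_apply_power_eq_spike hInv hT β q
  -- spikes at one point are comparable, hence so are their images
  have hP : ∀ u κ, P u κ = P u 0 := fun u κ => by
    rcases le_total κ 0 with h | h
    · have h' := hT (show spike u κ ≤ spike u 0 from spikeFn_le_spikeFn_iff.2 ⟨rfl, h⟩)
      rw [hBP, hBP] at h'
      exact (powerFn_le_powerFn_iff.1 h').1.symm
    · have h' := hT (show spike u 0 ≤ spike u κ from spikeFn_le_spikeFn_iff.2 ⟨rfl, h⟩)
      rw [hBP, hBP] at h'
      exact (powerFn_le_powerFn_iff.1 h').1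
  have hY : ∀ q β, Y q β = Y q 0 := fun q β => by
    rcases le_total β 0 with h | h
    · have h' := hT (show power β q ≤ power 0 q from powerFn_le_powerFn_iff.2 ⟨rfl, h⟩)
      rw [hYK, hYK] at h'
      exact (spikeFn_le_spikeFn_iff.1 h').1.symm
    · have h' := hT (show power 0 q ≤ power β q from powerFn_le_powerFn_iff.2 ⟨rfl, h⟩)
      rw [hYK, hYK] at h'
      exact (spikeFn_le_spikeFn_iff.1 h').1
  exact ⟨B, fun u => P u 0, fun q => Y q 0, K, fun u κ => by rw [hBP, hP],
    fun q β => by rw [hYK, hY]⟩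

lemma exists_apply_spike_eq_power_affine :
    ∃ a b C, C ≠ 0 ∧ ∀ u κ, T (spike u κ) = power (a + b * u - κ) (b + C * u) := by
  obtain ⟨B, P, Y, K, hs, hp⟩ := exists_apply_spike_power_params hInv hT
  have hM : ∀ u κ q β, β + q * u ≤ κ ↔ B u κ + P u * Y q ≤ K q β := fun u κ q β => by
    have h := apply_le_apply_iff hInv hT (a := spike u κ) (b := power β q)
    rw [hs, hp] at h
    rw [← powerFn_le_spikeFn_iff, ← powerFn_le_spikeFn_iff]
    exact h.symm
  have hB : ∀ u, Antitone (B u) := fun u κ κ' h => by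
    have h' := hT (show spike u κ ≤ spike u κ' from spikeFn_le_spikeFn_iff.2 ⟨rfl, h⟩)
    rw [hs, hs] at h'
    exact (powerFn_le_powerFn_iff.1 h').2
  have hspike : ∀ u κ, Y (P u) = u ∧ K (P u) (B u κ) = κ := fun u κ => by
    have h := hp (P u) (B u κ)
    rw [← hs, hInv] at h
    exact spike_inj.1 h.symm
  have hpower : ∀ q β, B (Y q) (K q β) = β := fun q β => by
    have h := hs (Y q) (K q β)
    rw [← hp, hInv] at h
    exact (power_inj.1 h.symm).1
  obtain ⟨a, b, C, hC, h⟩ := exists_affine_of_conjugation_relations hM hB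
    (fun u => (hspike u 0).1) (fun u κ => (hspike u κ).2) hpower
  exact ⟨a, b, C, hC, fun u κ => by rw [hs, (h u κ).1, (h u κ).2]⟩

end OrderReversingInvolution

/-- `x ↦ A x^(log B) f^◇(B x^C)` in the logarithmic parameters `A = e^a`, `B = e^b`. -/
def ggTransform (a b C : ℝ) (f : Rpos → ℝ≥0∞) : Rpos → ℝ≥0∞ := fun x =>
  eexp (a + b * x.log) * diamondP f (Rpos.exp (b + C * x.log))

section ggTransform

variable {a b C : ℝ}

lemma ggTransform_log_apply {A B : ℝ} (hA : 0 < A) (hB : 0 < B) (C : ℝ) (f : Rpos → ℝ≥0∞)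
    (x : Rpos) :
    ggTransform (Real.log A) (Real.log B) C f x = ENNReal.ofReal (A * x.1 ^ Real.log B) *
      diamondP f ⟨B * x.1 ^ C, mul_pos hB (Real.rpow_pos_of_pos x.2 C)⟩ := by
  have hpow : ∀ r, x.1 ^ r = Real.exp (r * x.log) := fun r => by
    rw [Real.rpow_def_of_pos x.2, mul_comm]; rfl
  rw [ggTransform, eexp, Real.exp_add, Real.exp_log hA, hpow]
  congr 3
  apply Subtype.ext
  change Real.exp (Real.log B + C * x.log) = B * x.1 ^ C
  rw [Real.exp_add, Real.exp_log hB, hpow]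

lemma ggTransform_spikeFn (u κ : ℝ) :
    ggTransform a b C (spikeFn u κ) = powerFn (a + b * u - κ) (b + C * u) := by
  funext x
  rw [ggTransform, diamondP_spikeFn, powerFn, powerFn, Rpos.log_exp, ← eexp_add]
  ring_nf

lemma ggTransform_antitone : Antitone (ggTransform a b C) := fun _ _ h _ =>
  mul_le_mul' le_rfl (diamondP_antitone h _)

lemma diamondP_ggTransform (hC : C ≠ 0) (f : Rpos → ℝ≥0∞) (s : ℝ) :
    diamondP (ggTransform a b C f) (Rpos.exp (b + C * s)) =
      eexp (-(a + b * s)) * diamondP (diamondP f) (Rpos.exp s) := by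
  have hterm : ∀ t (d : ℝ≥0∞), eexp (t * (b + C * s)) / (eexp (a + b * t) * d) =
      eexp (-(a + b * s)) * (eexp ((b + C * t) * s) / d) := fun t d => by
    rw [div_eq_mul_inv, div_eq_mul_inv, ENNReal.mul_inv (Or.inl (eexp_ne_zero _))
      (Or.inl (eexp_ne_top _)), eexp_inv, ← mul_assoc, ← mul_assoc, ← eexp_add, ← eexp_add]
    ring_nf
  have hsurj : Function.Surjective fun t => b + C * t := fun m =>
    ⟨(m - b) / C, by simp only; field_simp; ring⟩
  rw [diamondP_eq_iSup (ggTransform a b C f), diamondP_eq_iSup (diamondP f), ENNReal.mul_iSup]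
  conv_rhs => rw [← hsurj.iSup_comp]
  refine iSup_congr fun t => ?_
  rw [ggTransform, Rpos.log_exp, Rpos.log_exp, Rpos.log_exp]
  exact hterm t _

lemma ggTransform_ggTransform (hC : C ≠ 0) {f : Rpos → ℝ≥0∞} (hf : f ∈ Gclass) :
    ggTransform a b C (ggTransform a b C f) = f := by
  funext x
  rw [ggTransform, diamondP_ggTransform hC, diamondP_diamondP hf, Rpos.exp_log, ← mul_assoc,
    ← eexp_add, add_neg_cancel, eexp_zero, one_mul]

end ggTransform

open Gclass in
lemma apply_eq_ggTransform_of_eq_on_spike_power {T : ↥Gclass → ↥Gclass} (hT : Antitone T)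
    {a b C : ℝ} (hs : ∀ u κ, (T (spike u κ)).1 = ggTransform a b C (spikeFn u κ))
    (hp : ∀ β q, (T (power β q)).1 = ggTransform a b C (powerFn β q)) (f : ↥Gclass) :
    (T f).1 = ggTransform a b C f.1 := by
  funext x
  set z := Rpos.exp (b + C * x.log)
  refine le_antisymm ?_ ?_
  · -- `f` lies above the power function of slope `log z` supporting it
    rcases eq_or_ne (diamondP f.1 z) ⊤ with hz | hz
    · rw [ggTransform, hz, ENNReal.mul_top (eexp_ne_zero _)]
      exact le_top
    obtain ⟨σ, hσ⟩ := exists_eexp_eq (diamondP_pos f.2.2.1.2 z).ne' hz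
    have hle : power (-σ) (b + C * x.log) ≤ f :=
      powerFn_le_iff_diamondP_le.2 (by rw [neg_neg, hσ])
    calc (T f).1 x ≤ (T (power (-σ) (b + C * x.log))).1 x := hT hle x
      _ = ggTransform a b C f.1 x := by
        rw [hp, ggTransform, ggTransform, diamondP_powerFn, spikeFn_exp, neg_neg, hσ]
  · -- `f` lies below the spike through each of its points
    rw [ggTransform, diamondP_eq_iSup, ENNReal.mul_iSup]
    refine iSup_le fun t => ?_
    rcases eq_or_ne (f.1 (Rpos.exp t)) ⊤ with ht | ht
    · simp [ht]
    obtain ⟨κ, hκ⟩ := exists_eexp_eq (f.2.2.1.1 _).ne' ht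
    have hle : f ≤ spike t κ := le_spikeFn_iff.2 hκ.ge
    calc _ = (T (spike t κ)).1 x := by
          rw [hs, ggTransform, diamondP_spikeFn, ← hκ, eexp_div, powerFn]
          ring_nf
      _ ≤ (T f).1 x := hT hle x

open Gclass in
theorem exists_apply_eq_ggTransform {T : ↥Gclass → ↥Gclass} (hInv : Function.Involutive T)
    (hT : Antitone T) : ∃ a b C, C ≠ 0 ∧ ∀ f, (T f).1 = ggTransform a b C f.1 := by
  obtain ⟨a, b, C, hC, hs⟩ := exists_apply_spike_eq_power_affine hInv hT
  have hs' : ∀ u κ, (T (spike u κ)).1 = ggTransform a b C (spikeFn u κ) := fun u κ => by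
    rw [hs, ggTransform_spikeFn]; rfl
  -- every power function is the transform of a spike, and `T` and the transform are involutions
  have hp' : ∀ β q, (T (power β q)).1 = ggTransform a b C (powerFn β q) := fun β q => by
    set u := (q - b) / C
    have hq : power β q = T (spike u (a + b * u - β)) := by
      rw [hs, power_inj]
      exact ⟨by ring, by simp only [u]; field_simp; ring⟩
    have hq' : powerFn β q = (T (spike u (a + b * u - β))).1 := congrArg Subtype.val hq
    rw [hq, hInv, hq', hs', ggTransform_ggTransform hC (spikeFn_mem_Gclass _ _)]
    rfl
  exact ⟨a, b, C, hC, apply_eq_ggTransform_of_eq_on_spike_power hT hs' hp'⟩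

end

/-- Axiomatization of GG-conjugation: a one-to-one `T : 𝒢(0,∞) → 𝒢(0,∞)` is
involutive and order-reversing iff `(T f)(x) = A · x^(log B) · f^◇(B x^C)` for some
`A > 0`, `B > 0`, `C ∈ ℝ`. -/
theorem ggdual_axiomatization (T : ↥Gclass → ↥Gclass) (hT : Function.Injective T) :
    ((∀ f, T (T f) = f) ∧
      (∀ f g : ↥Gclass, g.1 ≤ f.1 → (T f).1 ≤ (T g).1))
    ↔ ∃ (A B C : ℝ) (_ : 0 < A) (hB : 0 < B),
        ∀ (f : ↥Gclass) (x : Rpos),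
          (T f).1 x
            = ENNReal.ofReal (A * x.1 ^ Real.log B) *
                diamondP f.1 ⟨B * x.1 ^ C,
                  mul_pos hB (Real.rpow_pos_of_pos x.2 C)⟩ := by
  constructor
  · rintro ⟨hInv, hOrd⟩
    obtain ⟨a, b, C, -, h⟩ := exists_apply_eq_ggTransform hInv fun f g hfg => hOrd g f hfg
    refine ⟨Real.exp a, Real.exp b, C, Real.exp_pos a, Real.exp_pos b, fun f x => ?_⟩
    rw [← ggTransform_log_apply (Real.exp_pos a) (Real.exp_pos b), Real.log_exp, Real.log_exp, h]
  · rintro ⟨A, B, C, hA, hB, h⟩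
    have hTf : ∀ f, (T f).1 = ggTransform (Real.log A) (Real.log B) C f.1 := fun f =>
      funext fun x => by rw [h, ggTransform_log_apply hA hB]
    have hC : C ≠ 0 := by
      rintro rfl
      -- for `C = 0` the transform does not see where a spike sits
      have hspikes : T (Gclass.spike 0 0) = T (Gclass.spike 1 (Real.log B)) := Subtype.ext (by
        rw [hTf, hTf]
        change ggTransform _ _ 0 (spikeFn 0 0) = ggTransform _ _ 0 (spikeFn 1 (Real.log B))
        rw [ggTransform_spikeFn, ggTransform_spikeFn, powerFn_inj]
        constructor <;> ring)
      exact zero_ne_one (Gclass.spike_inj.1 (hT hspikes)).1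
    exact ⟨fun f => Subtype.ext (by rw [hTf, hTf, ggTransform_ggTransform hC f.2]),
      fun f g hgf => by rw [hTf, hTf]; exact ggTransform_antitone hgf⟩
end

section
/- Let S be a set of functions from a set Ω to (0,∞) that is closed under positive scalar multiples and under the operation (X,Y,λ) ↦ X^λ·Y^{1−λ} (pointwise powers and products) for λ ∈ (0,1), and let ρ : S → (0,∞) be positively homogeneous (ρ(λX) = λ·ρ(X) for every λ > 0 and X ∈ S) and GA-convex (ρ(X^λ·Y^{1−λ}) ≤ λ·ρ(X) + (1−λ)·ρ(Y) for all X, Y ∈ S and λ ∈ (0,1)). Then ρ is GG-convex: ρ(X^λ·Y^{1−λ}) ≤ ρ(X)^λ·ρ(Y)^{1−λ} for all X, Y ∈ S and λ ∈ (0,1). -/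
open Real Set

/-- A positively homogeneous, GA-convex functional `ρ` on a set `S` of positive
functions (closed under positive scalar multiples and pointwise geometric
combinations) is GG-convex. -/
theorem ggConvex_of_posHom_gaConvex {Ω : Type*} (S : Set (Ω → ℝ))
    (hSpos : ∀ X ∈ S, ∀ ω, 0 < X ω)
    (hSscale : ∀ X ∈ S, ∀ c : ℝ, 0 < c → (fun ω => c * X ω) ∈ S)
    (hSgeom : ∀ X ∈ S, ∀ Y ∈ S, ∀ l ∈ Set.Ioo (0 : ℝ) 1,
      (fun ω => X ω ^ l * Y ω ^ (1 - l)) ∈ S)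
    (ρ : (Ω → ℝ) → ℝ)
    (hρpos : ∀ X ∈ S, 0 < ρ X)
    (hPH : ∀ X ∈ S, ∀ c : ℝ, 0 < c → ρ (fun ω => c * X ω) = c * ρ X)
    (hGA : ∀ X ∈ S, ∀ Y ∈ S, ∀ l ∈ Set.Ioo (0 : ℝ) 1,
      ρ (fun ω => X ω ^ l * Y ω ^ (1 - l)) ≤ l * ρ X + (1 - l) * ρ Y) :
    ∀ X ∈ S, ∀ Y ∈ S, ∀ l ∈ Set.Ioo (0 : ℝ) 1,
      ρ (fun ω => X ω ^ l * Y ω ^ (1 - l)) ≤ ρ X ^ l * ρ Y ^ (1 - l) := by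
  intro X hX Y hY l hl
  obtain ⟨hl0, hl1⟩ := hl
  have hX0 := hρpos X hX
  have hY0 := hρpos Y hY
  set a := ρ X with ha
  set b := ρ Y with hb
  have hainv : (0:ℝ) < a⁻¹ := inv_pos.mpr hX0
  have hbinv : (0:ℝ) < b⁻¹ := inv_pos.mpr hY0
  have hX' : (fun ω => a⁻¹ * X ω) ∈ S := hSscale X hX _ hainv
  have hY' : (fun ω => b⁻¹ * Y ω) ∈ S := hSscale Y hY _ hbinv
  have hGA' := hGA _ hX' _ hY' l ⟨hl0, hl1⟩
  rw [hPH X hX _ hainv, hPH Y hY _ hbinv] at hGA'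
  have hptw : ∀ ω, (a⁻¹ * X ω) ^ l * (b⁻¹ * Y ω) ^ (1 - l)
      = (a⁻¹ ^ l * b⁻¹ ^ (1 - l)) * (X ω ^ l * Y ω ^ (1 - l)) := by
    intro ω
    rw [Real.mul_rpow hainv.le (hSpos X hX ω).le,
        Real.mul_rpow hbinv.le (hSpos Y hY ω).le]
    ring
  have hfun : (fun ω => (a⁻¹ * X ω) ^ l * (b⁻¹ * Y ω) ^ (1 - l))
      = (fun ω => (a⁻¹ ^ l * b⁻¹ ^ (1 - l)) * (X ω ^ l * Y ω ^ (1 - l))) :=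
    funext hptw
  have hc : (0:ℝ) < a⁻¹ ^ l * b⁻¹ ^ (1 - l) :=
    mul_pos (Real.rpow_pos_of_pos hainv l) (Real.rpow_pos_of_pos hbinv _)
  rw [hfun, hPH _ (hSgeom X hX Y hY l ⟨hl0, hl1⟩) _ hc] at hGA'
  have hone : l * (a⁻¹ * a) + (1 - l) * (b⁻¹ * b) = 1 := by
    rw [inv_mul_cancel₀ hX0.ne', inv_mul_cancel₀ hY0.ne']; ring
  rw [hone] at hGA'
  have hcinv : a⁻¹ ^ l * b⁻¹ ^ (1 - l) = (a ^ l * b ^ (1 - l))⁻¹ := by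
    rw [Real.inv_rpow hX0.le, Real.inv_rpow hY0.le, mul_inv]
  rw [hcinv, inv_mul_le_iff₀ (by positivity), mul_one] at hGA'
  exact hGA'
end

section
/- Let (Ω, ℱ, ℙ) be a probability space, let X and Z be independent random variables taking values in (0,∞) with log X and log Z integrable and 𝔼[log Z] = 0 (i.e. 𝔾[Z] = 1), and set Y = X·Z. Then X ≤_{GA-cx} Y, i.e. 𝔼[f(X)] ≤ 𝔼[f(Y)] for every GA-convex function f : (0,∞) → ℝ such that both f(X) and f(Y) are integrable. -/
open Real Set MeasureTheory ProbabilityTheory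

/-- If `X` and `Z` are independent positive random variables with `log X`, `log Z`
integrable and `𝔼[log Z] = 0` (i.e. `𝔾[Z] = 1`), then `X ≤_{GA-cx} X·Z`:
`𝔼[f(X)] ≤ 𝔼[f(X·Z)]` for every GA-convex `f : (0,∞) → ℝ` such that both `f(X)`
and `f(X·Z)` are integrable. -/
theorem gaConvexOrder_mul_indep {Ω : Type*} [MeasurableSpace Ω]
    (μ : Measure Ω) [IsProbabilityMeasure μ]
    (X Z : Ω → ℝ) (hXm : Measurable X) (hZm : Measurable Z)
    (hindep : IndepFun X Z μ)
    (hXpos : ∀ ω, 0 < X ω) (hZpos : ∀ ω, 0 < Z ω)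
    (hlogX : Integrable (fun ω => Real.log (X ω)) μ)
    (hlogZ : Integrable (fun ω => Real.log (Z ω)) μ)
    (hGZ : ∫ ω, Real.log (Z ω) ∂μ = 0) :
    ∀ f : ℝ → ℝ,
      (∀ x ∈ Set.Ioi (0 : ℝ), ∀ y ∈ Set.Ioi (0 : ℝ), ∀ l ∈ Set.Ioo (0 : ℝ) 1,
        f (x ^ l * y ^ (1 - l)) ≤ l * f x + (1 - l) * f y) →
      Integrable (fun ω => f (X ω)) μ →
      Integrable (fun ω => f (X ω * Z ω)) μ →
      ∫ ω, f (X ω) ∂μ ≤ ∫ ω, f (X ω * Z ω) ∂μ := by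
  intro f hf hfX hfXZ
  -- g = f ∘ exp
  set g : ℝ → ℝ := fun t => f (Real.exp t) with hg_def
  -- g is convex on ℝ
  have hgconv : ConvexOn ℝ Set.univ g := by
    refine ⟨convex_univ, fun a _ b _ p q hp hq hpq => ?_⟩
    rcases eq_or_lt_of_le hp with hp0 | hp0
    · have hq1 : q = 1 := by linarith
      simp [← hp0, hq1]
    rcases eq_or_lt_of_le hq with hq0 | hq0
    · have hp1 : p = 1 := by linarith
      simp [← hq0, hp1]
    have hq' : q = 1 - p := by linarith
    have key := hf (Real.exp a) (Real.exp_pos a) (Real.exp b) (Real.exp_pos b)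
      p ⟨hp0, by linarith⟩
    have hxa : Real.exp a ^ p = Real.exp (p * a) := by
      rw [← Real.exp_mul]; ring_nf
    have hxb : Real.exp b ^ (1 - p) = Real.exp ((1 - p) * b) := by
      rw [← Real.exp_mul]; ring_nf
    rw [hxa, hxb, ← Real.exp_add] at key
    simpa [hg_def, hq', smul_eq_mul] using key
  have hgcont : Continuous g :=
    continuousOn_univ.mp (hgconv.continuousOn isOpen_univ)
  set U : Ω → ℝ := fun ω => Real.log (X ω) with hU_def
  set V : Ω → ℝ := fun ω => Real.log (Z ω) with hV_def
  have hUm : Measurable U := measurable_log.comp hXm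
  have hVm : Measurable V := measurable_log.comp hZm
  set κ : Measure ℝ := Measure.map U μ with hκ_def
  set ν : Measure ℝ := Measure.map V μ with hν_def
  have hκP : IsProbabilityMeasure κ := Measure.isProbabilityMeasure_map hUm.aemeasurable
  have hνP : IsProbabilityMeasure ν := Measure.isProbabilityMeasure_map hVm.aemeasurable
  -- independence gives the product structure
  have hUVindep : IndepFun U V μ := hindep.comp measurable_log measurable_log
  have hmap : Measure.map (fun ω => (U ω, V ω)) μ = κ.prod ν :=
    (indepFun_iff_map_prod_eq_prod_map_map hUm.aemeasurable hVm.aemeasurable).mp hUVindep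
  -- rewrite the two integrals
  have hfX_eq : (fun ω => f (X ω)) = fun ω => g (U ω) := by
    funext ω; simp [hg_def, hU_def, Real.exp_log (hXpos ω)]
  have hfXZ_eq : (fun ω => f (X ω * Z ω)) = fun ω => g (U ω + V ω) := by
    funext ω
    simp [hg_def, hU_def, hV_def, Real.exp_add, Real.exp_log (hXpos ω),
      Real.exp_log (hZpos ω)]
  -- integrabilities on the pushforward measures
  have hgκ : Integrable g κ := by
    rw [hκ_def, integrable_map_measure hgcont.aestronglyMeasurable hUm.aemeasurable]
    rw [hfX_eq] at hfX; exact hfX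
  have hGsm : AEStronglyMeasurable (fun p : ℝ × ℝ => g (p.1 + p.2)) (κ.prod ν) :=
    (hgcont.comp (continuous_fst.add continuous_snd)).aestronglyMeasurable
  have hGπ : Integrable (fun p : ℝ × ℝ => g (p.1 + p.2)) (κ.prod ν) := by
    rw [← hmap] at hGsm ⊢
    refine (integrable_map_measure hGsm (hUm.prodMk hVm).aemeasurable).mpr ?_
    rw [hfXZ_eq] at hfXZ; exact hfXZ
  have hidsm : AEStronglyMeasurable (fun v : ℝ => v) ν :=
    aestronglyMeasurable_id
  have hVν : Integrable (fun v : ℝ => v) ν := by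
    rw [hν_def] at hidsm ⊢
    exact (integrable_map_measure hidsm hVm.aemeasurable).mpr hlogZ
  have hVmean : ∫ v, v ∂ν = 0 := by
    rw [hν_def] at hidsm ⊢
    rw [integral_map hVm.aemeasurable hidsm]
    exact hGZ
  -- main comparison
  have hLHS : ∫ ω, f (X ω) ∂μ = ∫ u, g u ∂κ := by
    rw [hκ_def, integral_map hUm.aemeasurable hgcont.aestronglyMeasurable, hfX_eq]
  have hRHS : ∫ ω, f (X ω * Z ω) ∂μ = ∫ p : ℝ × ℝ, g (p.1 + p.2) ∂(κ.prod ν) := by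
    rw [← hmap] at hGsm ⊢
    rw [integral_map (hUm.prodMk hVm).aemeasurable hGsm, hfXZ_eq]
  rw [hLHS, hRHS, MeasureTheory.integral_prod _ hGπ]
  -- Jensen on each slice
  have hslice : ∀ᵐ u ∂κ, g u ≤ ∫ v, g (u + v) ∂ν := by
    filter_upwards [hGπ.prod_right_ae] with u hu
    have hint : Integrable (fun v => u + v) ν := (integrable_const u).add hVν
    have hmean : ∫ v, (u + v) ∂ν = u := by
      rw [integral_add (integrable_const u) hVν, hVmean, integral_const]
      simp
    have := hgconv.map_integral_le (hgcont.continuousOn) isClosed_univ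
      (Filter.Eventually.of_forall fun _ => Set.mem_univ _) hint ?_
    · rw [hmean] at this; exact this
    · exact hu
  exact integral_mono_ae hgκ hGπ.integral_prod_left hslice
end
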